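/- For every nonempty finite type X, the selection function argmax : (X → ℝ) → Finset X, argmax k = {x | ∀ x', k x ≥ k x'}, is witnessing (with outcome semilattice R = ℝ under max). -/
import Mathlib


universe u

/-- A multi-valued selection function `ε : (X → R) → Finset X` (with outcomes in the
join-semilattice `R`) is *witnessing* if for every indexing function
`I : X → Finset (X → R)` (with nonempty values) and every
`x ∈ ε (fun x' => ⋁ {P x' | P ∈ I x'})`, there is a choice function `p` for `I`
with `x ∈ ε (fun x' => p x' x')`. -/
def Witnessing {X : Type u} {R : Type} [SemilatticeSup R]
    (ε : (X → R) → Finset X) : Prop :=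
  ∀ (I : X → Finset (X → R)) (hI : ∀ x, (I x).Nonempty) (x : X),
    x ∈ ε (fun x' => (I x').sup' (hI x') (fun P => P x')) →
      ∃ p : X → X → R, (∀ x', p x' ∈ I x') ∧ x ∈ ε (fun x' => p x' x')

/-- `argmax k = {x | ∀ x', k x ≥ k x'}`. -/
noncomputable def argmax {X : Type u} [Fintype X] (k : X → ℝ) : Finset X :=
  Finset.univ.filter (fun x => ∀ x', k x' ≤ k x)

/-- For every nonempty finite type `X`, the selection function `argmax` is witnessing
(with outcome semilattice `ℝ` under `max`). -/
theorem argmax_witnessing {X : Type u} [Fintype X] [Nonempty X] :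
    Witnessing (argmax (X := X)) := by
  intro I hI x hx
  have hex : ∀ x', ∃ P ∈ I x', (I x').sup' (hI x') (fun P => P x') = P x' :=
    fun x' => Finset.exists_mem_eq_sup' (hI x') _
  choose p hp hps using hex
  refine ⟨p, hp, ?_⟩
  simp only [argmax, Finset.mem_filter, Finset.mem_univ, true_and] at hx ⊢
  intro x'
  rw [← hps x', ← hps x]
  exact hx x'
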